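/- arXiv:2203.15960 — 3 statements merged into one kernel-verified Lean document; each statement's English description precedes it below -/
import Mathlib

section
/- Let g : S¹ → S¹ be a continuous degree-one circle map with lift g̃ and induced lift g_k : S_k → S_k on the k-fold cover (k ≥ 1 a finite integer). If Z ⊆ S¹ is a minimal set for g, then there exists a positive integer m dividing k and pairwise disjoint sets Z'_1, …, Z'_m ⊆ S_k such that the full lift π_k⁻¹(Z) equals Z'_1 ∪ … ∪ Z'_m, each Z'_j is a minimal set for g_k, π_k(Z'_j) = Z for every j, and T_k maps each Z'_j onto Z'_{j+1} (indices mod m). -/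
open Set Filter Topology MeasureTheory Function
open scoped ENNReal Classical

noncomputable section

/-- The circle ℝ/ℤ. -/
abbrev Circle1 : Type := AddCircle (1 : ℝ)

/-- The k-fold cover ℝ/kℤ. -/
abbrev CircleK (k : ℕ) : Type := AddCircle ((k : ℝ))

/-- Projection ℝ → ℝ/ℤ. -/
def mk1 : ℝ → Circle1 := fun x => (x : Circle1)

/-- Projection ℝ → ℝ/kℤ. -/
def mkk (k : ℕ) : ℝ → CircleK k := fun x => (x : CircleK k)

/-- Covering projection S_k → S¹ induced by the identity on ℝ. -/
def piK (k : ℕ) : CircleK k → Circle1 :=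
  QuotientAddGroup.map (AddSubgroup.zmultiples ((k : ℕ) : ℝ)) (AddSubgroup.zmultiples (1 : ℝ))
    (AddMonoidHom.id ℝ)
    (by
      intro x hx
      obtain ⟨n, rfl⟩ := AddSubgroup.mem_zmultiples_iff.mp hx
      simp only [AddSubgroup.mem_comap, AddMonoidHom.id_apply]
      exact AddSubgroup.mem_zmultiples_iff.mpr
        ⟨n * (k : ℤ), by push_cast [zsmul_eq_mul]; ring⟩)

/-- Deck transformation of S_k, induced by x ↦ x + 1. -/
def TK (k : ℕ) : CircleK k → CircleK k := fun x => x + mkk k 1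

/-- Forward orbit of a point. -/
def fwdOrbit {X : Type*} (f : X → X) (x : X) : Set X := Set.range fun n : ℕ => f^[n] x

/-- A nonempty compact invariant set on which every forward orbit is dense. -/
def IsMinimalSet {X : Type*} [TopologicalSpace X] (f : X → X) (Z : Set X) : Prop :=
  Z.Nonempty ∧ IsCompact Z ∧ Set.MapsTo f Z Z ∧ ∀ z ∈ Z, Z ⊆ closure (fwdOrbit f z)

/-- x = lim f^[n i] x along some sequence n i → ∞. -/
def IsRecurrentPt {X : Type*} [TopologicalSpace X] (f : X → X) (x : X) : Prop :=
  ∃ n : ℕ → ℕ, Tendsto n atTop atTop ∧ Tendsto (fun i => f^[n i] x) atTop (𝓝 x)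

/-- The point x has rotation number ρ for the lift gt. -/
def HasPtRotNum (gt : ℝ → ℝ) (x ρ : ℝ) : Prop :=
  Tendsto (fun n : ℕ => (gt^[n] x - x) / n) atTop (𝓝 ρ)

/-- gt has rotation number ρ (the limit exists for all points and equals ρ). -/
def HasRotNum (gt : ℝ → ℝ) (ρ : ℝ) : Prop := ∀ x, HasPtRotNum gt x ρ

/-- The rotation set of a lift. -/
def rotSet (gt : ℝ → ℝ) : Set ℝ := {ρ | ∃ x, HasPtRotNum gt x ρ}

/-- Continuous nondecreasing degree-one lift. -/
def IsSemiMonotoneLift (ht : ℝ → ℝ) : Prop :=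
  Continuous ht ∧ Monotone ht ∧ ∀ x, ht (x + 1) = ht x + 1

/-- [a,b] is (a fundamental-domain representative of) a maximal nontrivial closed
arc on which the induced circle map is constant. -/
def IsFlatSpot (ht : ℝ → ℝ) (a b : ℝ) : Prop :=
  a < b ∧ b - a < 1 ∧ (∀ x ∈ Set.Icc a b, ht x = ht a) ∧
    ∀ a' b', a' ≤ a → b ≤ b' → (∀ x ∈ Set.Icc a' b', ht x = ht a) → a' = a ∧ b' = b

/-- The left shift on one-sided sequences. -/
def shiftSeq {α : Type*} : (ℕ → α) → ℕ → α := fun s n => s (n + 1)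

/-- Strict lexicographic order on one-sided sequences. -/
def lexLt {α : Type*} [LT α] (s t : ℕ → α) : Prop :=
  ∃ n, (∀ i, i < n → s i = t i) ∧ s n < t n

/-- Lexicographic order on one-sided sequences. -/
def lexLe {α : Type*} [LT α] (s t : ℕ → α) : Prop := s = t ∨ lexLt s t

/-- Reduction of every entry mod 2. -/
def pihat : (ℕ → ℕ) → ℕ → ℕ := fun s n => s n % 2

/-- The sequence s has symbolic rotation number ω: the averages of the mod-2
reductions of its entries converge to ω. -/
def symbRot (s : ℕ → ℕ) (ω : ℝ) : Prop :=
  Tendsto (fun n : ℕ => (∑ i ∈ Finset.range (n + 1), ((s i % 2 : ℕ) : ℝ)) / (n + 1))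
    atTop (𝓝 ω)

/-- Allowed transitions for Ω_k (entries mod 2k). -/
def transK (k : ℕ) (a c : ℕ) : Prop :=
  (Even a ∧ (c = a ∨ c = a + 1)) ∨ (Odd a ∧ (c = (a + 1) % (2 * k) ∨ c = (a + 2) % (2 * k)))

/-- The subshift Ω_k ⊆ Σ⁺_{2k}. -/
def OmegaK (k : ℕ) : Set (ℕ → ℕ) :=
  {s | (∀ n, s n < 2 * k) ∧ ∀ n, transK k (s n) (s (n + 1))}

/-- Allowed transitions for Ω_∞. -/
def transZ (a c : ℤ) : Prop :=
  (Even a ∧ (c = a ∨ c = a + 1)) ∨ (Odd a ∧ (c = a + 1 ∨ c = a + 2))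

/-- The subshift Ω_∞ ⊆ ℤ^ℕ. -/
def OmegaInf : Set (ℕ → ℤ) := {s | ∀ n, transZ (s n) (s (n + 1))}

/-- p̂_k : Ω_∞ → Ω_k, reduction of all entries mod 2k. -/
def projK (k : ℕ) : (ℕ → ℤ) → ℕ → ℕ := fun s n => (s n % (2 * k : ℤ)).toNat

/-- A symbolic k-fold semi-monotone subset of Ω_k. -/
def SymbolicKfsm (k : ℕ) (Z : Set (ℕ → ℕ)) : Prop :=
  Z ⊆ OmegaK k ∧ Set.MapsTo shiftSeq Z Z ∧
    ∃ Z' : Set (ℕ → ℤ), Z' ⊆ OmegaInf ∧ Set.MapsTo shiftSeq Z' Z' ∧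
      (fun s : ℕ → ℤ => fun n => s n + 2 * k) '' Z' = Z' ∧
      (∀ s ∈ Z', ∀ t ∈ Z', lexLe s t → lexLe (shiftSeq s) (shiftSeq t)) ∧
      projK k '' Z' = Z

/-- The dynamical order interval ⟨a, b⟩. -/
def dynInterval (a b : ℕ → ℕ) : Set (ℕ → ℕ) :=
  {s | ∀ n, lexLe a (shiftSeq^[n] s) ∧ lexLe (shiftSeq^[n] s) b}

/-- The unique shift-invariant probability measure on the orbit of a periodic
point of period N: the uniform average of point masses along the orbit. -/
noncomputable def orbitMeasure (s : ℕ → ℕ) (N : ℕ) : Measure (ℕ → ℕ) :=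
  (N : ℝ≥0∞)⁻¹ • ∑ i ∈ Finset.range N, Measure.dirac (shiftSeq^[i] s)

/-! ### The Hedlund–Morse construction -/

/-- Partial sums ν₁ + ⋯ + ν_j. -/
def psum {k : ℕ} (ν : Fin k → ℝ) (j : ℕ) : ℝ := ∑ i : Fin k, if (i : ℕ) < j then ν i else 0

/-- An allowable HM parameter pair. -/
def HMAllowable {k : ℕ} (ω : ℝ) (ν : Fin k → ℝ) : Prop :=
  0 < ω ∧ ω < 1 ∧ (∀ i, 0 ≤ ν i) ∧ ∑ i, ν i = k * (1 - ω)

/-- Left endpoint of the HM address interval X_m. -/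
def hmL {k : ℕ} (ω : ℝ) (ν : Fin k → ℝ) (m : ℕ) : ℝ :=
  if Even m then psum ν (m / 2) + ((m / 2 : ℕ) : ℝ) * ω
  else psum ν (m / 2 + 1) + ((m / 2 : ℕ) : ℝ) * ω

/-- Right endpoint of the HM address interval X_m. -/
def hmR {k : ℕ} (ω : ℝ) (ν : Fin k → ℝ) (m : ℕ) : ℝ :=
  if Even m then psum ν (m / 2 + 1) + ((m / 2 : ℕ) : ℝ) * ω
  else psum ν (m / 2 + 1) + ((m / 2 + 1 : ℕ) : ℝ) * ω

/-- The HM address interval X_m ⊆ ℝ (a fundamental-domain representative). -/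
def hmX {k : ℕ} (ω : ℝ) (ν : Fin k → ℝ) (m : ℕ) : Set ℝ := Set.Icc (hmL ω ν m) (hmR ω ν m)

/-- Rigid rotation by ω on S_k. -/
def RotK (k : ℕ) (ω : ℝ) : CircleK k → CircleK k := fun x => x + mkk k ω

/-- The good set: points whose forward rotation orbit avoids all endpoints of the
address intervals. -/
def hmGood (k : ℕ) (ω : ℝ) (ν : Fin k → ℝ) : Set (CircleK k) :=
  {x | ∀ n : ℕ, ∀ m, m < 2 * k →
    (RotK k ω)^[n] x ≠ mkk k (hmL ω ν m) ∧ (RotK k ω)^[n] x ≠ mkk k (hmR ω ν m)}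

/-- The address of a point of S_k (the index m with x ∈ X_m; junk value 0 if none). -/
noncomputable def hmAddr (k : ℕ) (ω : ℝ) (ν : Fin k → ℝ) (x : CircleK k) : ℕ :=
  if h : ∃ m, m < 2 * k ∧ x ∈ mkk k '' hmX ω ν m then h.choose else 0

/-- The HM itinerary of a point of S_k. -/
noncomputable def hmZeta (k : ℕ) (ω : ℝ) (ν : Fin k → ℝ) (x : CircleK k) : ℕ → ℕ :=
  fun n => hmAddr k ω ν ((RotK k ω)^[n] x)

/-- B_k(ω,ν): the closure of the set of itineraries of good points. -/
noncomputable def hmB (k : ℕ) (ω : ℝ) (ν : Fin k → ℝ) : Set (ℕ → ℕ) :=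
  closure (hmZeta k ω ν '' hmGood k ω ν)

/-- λ_k(ω,ν) = ζ_*(Leb)/k, where Leb is Lebesgue measure on S_k = [0,k). -/
noncomputable def hmLambda (k : ℕ) (ω : ℝ) (ν : Fin k → ℝ) : Measure (ℕ → ℕ) :=
  (k : ℝ≥0∞)⁻¹ •
    ((((volume.restrict (Set.Ico (0 : ℝ) (k : ℝ))).map (mkk k)).restrict
        (hmGood k ω ν)).map (hmZeta k ω ν))

/-- The left cyclic shift τ on ℝ^k. -/
def cyc {k : ℕ} (ν : Fin k → ℝ) : Fin k → ℝ :=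
  fun i => ν ⟨(i.val + 1) % k, Nat.mod_lt _ (Nat.lt_of_le_of_lt (Nat.zero_le _) i.isLt)⟩

/-- The Sturmian minimal set with rotation number ω. -/
noncomputable def sturmianSet (ω : ℝ) : Set (ℕ → ℕ) :=
  if ω = 0 then {fun _ => 0}
  else if ω = 1 then {fun _ => 1}
  else hmB 1 ω fun _ => 1 - ω

/-! ### The class 𝒢 of bimodal degree-one circle maps -/

/-- Piecewise C² on [0,1]. -/
def PiecewiseC2 (f : ℝ → ℝ) : Prop :=
  ∃ (n : ℕ) (x : ℕ → ℝ), x 0 = 0 ∧ x n = 1 ∧ (∀ i, i < n → x i ≤ x (i + 1)) ∧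
    ∀ i, i < n → ContDiffOn ℝ 2 f (Set.Ioo (x i) (x (i + 1)))

/-- g : S¹ → S¹ belongs to the class 𝒢, with lift gt and turning point xmax. -/
structure GMap (g : Circle1 → Circle1) (gt : ℝ → ℝ) (xmax : ℝ) : Prop where
  cont : Continuous gt
  pw : PiecewiseC2 gt
  deg : ∀ x, gt (x + 1) = gt x + 1
  lift : ∀ x, g (mk1 x) = mk1 (gt x)
  xmax_pos : 0 < xmax
  xmax_lt_one : xmax < 1
  expand : ∀ x ∈ Set.Ioo (0 : ℝ) xmax, ∃ d, 1 < d ∧ HasDerivAt gt d x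
  dec : ∀ x ∈ Set.Icc xmax 1, ∀ y ∈ Set.Icc xmax 1, x < y → gt y < gt x
  low : 0 ≤ gt 0
  mid : gt 0 < gt xmax
  high : gt xmax ≤ xmax + 1

/-- The address intervals I_m ⊆ ℝ: I_{2j} = [j, zmax+j], I_{2j+1} = [zmin+j, xmax+j]. -/
def addrI (zmax zmin xmax : ℝ) (m : ℤ) : Set ℝ :=
  if Even m then Set.Icc ((m / 2 : ℤ) : ℝ) (zmax + ((m / 2 : ℤ) : ℝ))
  else Set.Icc (zmin + (((m - 1) / 2 : ℤ) : ℝ)) (xmax + (((m - 1) / 2 : ℤ) : ℝ))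

/-- Λ_∞(g): points of ℝ whose forward gt-orbit stays in the address intervals. -/
def LambdaInf (gt : ℝ → ℝ) (zmax zmin xmax : ℝ) : Set ℝ :=
  {x | ∀ n : ℕ, ∃ m : ℤ, gt^[n] x ∈ addrI zmax zmin xmax m}

/-- Λ_k(g): points of S_k whose forward g_k-orbit stays in I_0 ∪ ⋯ ∪ I_{2k-1}. -/
def LambdaK (k : ℕ) (gk : CircleK k → CircleK k) (zmax zmin xmax : ℝ) : Set (CircleK k) :=
  {x | ∀ n : ℕ, ∃ m : ℕ, m < 2 * k ∧ gk^[n] x ∈ mkk k '' addrI zmax zmin xmax (m : ℤ)}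

/-- Λ₁(g): points of S¹ whose forward g-orbit stays in I₀ ∪ I₁. -/
def Lambda1 (g : Circle1 → Circle1) (zmax zmin xmax : ℝ) : Set Circle1 :=
  {x | ∀ n : ℕ, g^[n] x ∈ mk1 '' Set.Icc 0 zmax ∪ mk1 '' Set.Icc zmin xmax}

/-- A k-fold semi-monotone subset of S_k: it has a lift Z' ⊆ ℝ that is
gt-invariant, invariant under x ↦ x + k, and on which gt is weakly order
preserving. -/
def PhysKfsmK (gt : ℝ → ℝ) (k : ℕ) (Z : Set (CircleK k)) : Prop :=
  ∃ Z' : Set ℝ, (∀ x ∈ Z', gt x ∈ Z') ∧ (fun x => x + (k : ℝ)) '' Z' = Z' ∧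
    (∀ x ∈ Z', ∀ y ∈ Z', x < y → gt x ≤ gt y) ∧ mkk k '' Z' = Z

/-- A k-fold semi-monotone subset of S¹. -/
def PhysKfsm1 (gt : ℝ → ℝ) (k : ℕ) (Z : Set Circle1) : Prop :=
  ∃ Z' : Set ℝ, (∀ x ∈ Z', gt x ∈ Z') ∧ (fun x => x + (k : ℝ)) '' Z' = Z' ∧
    (∀ x ∈ Z', ∀ y ∈ Z', x < y → gt x ≤ gt y) ∧ mk1 '' Z' = Z

end

/-! The full lift `π_k⁻¹(Z)` is compact and `g_k`-invariant, so by Zorn's lemma it contains a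
minimal nonempty closed invariant set `Z₀`. Since `π_k` semiconjugates `g_k` to `g`, `π_k(Z₀)` is a
closed invariant subset of `Z`, hence all of `Z`. Integer translations commute with `g_k`, so the
translates of `Z₀` are again minimal, and two of them are equal or disjoint; they cover the full
lift because the fibres of `π_k` are the orbits of the integer translations. The translate by `j`
depends only on `j` modulo the stabilizer `mℤ` of `Z₀`, and `m ∣ k` because translation by `k` is
the identity of `S_k`. -/

open scoped Pointwise

lemma fwdOrbit_subset {X : Type*} {f : X → X} {A : Set X} (hA : MapsTo f A A) {z : X}
    (hz : z ∈ A) : fwdOrbit f z ⊆ A :=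
  range_subset_iff.mpr fun n => hA.iterate n hz

section MinimalSets

variable {X Y : Type*} [TopologicalSpace X] [TopologicalSpace Y]

def IsNonemptyClosedInvariant (f : X → X) (A : Set X) : Prop :=
  A.Nonempty ∧ IsClosed A ∧ MapsTo f A A

lemma isNonemptyClosedInvariant_closure_fwdOrbit {f : X → X} (hf : Continuous f) (z : X) :
    IsNonemptyClosedInvariant f (closure (fwdOrbit f z)) := by
  refine ⟨⟨z, subset_closure ⟨0, rfl⟩⟩, isClosed_closure, MapsTo.closure ?_ hf⟩
  rintro _ ⟨n, rfl⟩
  exact ⟨n + 1, iterate_succ_apply' f n z⟩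

lemma exists_minimal_isNonemptyClosedInvariant_subset {f : X → X} {W : Set X}
    (hWc : IsCompact W) (hW : IsNonemptyClosedInvariant f W) :
    ∃ A ⊆ W, Minimal (IsNonemptyClosedInvariant f) A := by
  set S := {A | A ⊆ W ∧ IsNonemptyClosedInvariant f A}
  have hchains : ∀ c ⊆ S, IsChain (· ⊆ ·) c → c.Nonempty → ∃ lb ∈ S, ∀ s ∈ c, lb ⊆ s := by
    intro c hcS hchain hcne
    have : Nonempty c := hcne.to_subtype
    obtain ⟨A₀, hA₀⟩ := hcne
    refine ⟨⋂₀ c, ⟨(sInter_subset_of_mem hA₀).trans (hcS hA₀).1, ?_, ?_, ?_⟩,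
      fun s hs => sInter_subset_of_mem hs⟩
    · have hdir : DirectedOn (· ⊇ ·) c := fun A hA B hB =>
        (hchain.total hA hB).elim (fun h => ⟨A, hA, subset_rfl, h⟩) fun h => ⟨B, hB, h, subset_rfl⟩
      exact IsCompact.nonempty_sInter_of_directed_nonempty_isCompact_isClosed
        hdir (fun A hA => (hcS hA).2.1)
        (fun A hA => hWc.of_isClosed_subset (hcS hA).2.2.1 (hcS hA).1) fun A hA => (hcS hA).2.2.1
    · exact isClosed_sInter fun A hA => (hcS hA).2.2.1
    · exact fun x hx A hA => (hcS hA).2.2.2 (hx A hA)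
  obtain ⟨A, hAW, hA⟩ := zorn_superset_nonempty S hchains W ⟨subset_rfl, hW⟩
  exact ⟨A, hAW, hA.prop.2, fun B hB hBA => hA.2 ⟨hBA.trans hAW, hB⟩ hBA⟩

lemma Minimal.isMinimalSet [CompactSpace X] {f : X → X} (hf : Continuous f) {A : Set X}
    (hA : Minimal (IsNonemptyClosedInvariant f) A) : IsMinimalSet f A := by
  obtain ⟨hne, hcl, hinv⟩ := hA.prop
  refine ⟨hne, hcl.isCompact, hinv, fun z hz => (hA.eq_of_subset ?_ ?_).ge⟩
  · exact isNonemptyClosedInvariant_closure_fwdOrbit hf z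
  · exact closure_minimal (fwdOrbit_subset hinv hz) hcl

lemma Minimal.disjoint_of_ne {f : X → X} {A B : Set X}
    (hA : Minimal (IsNonemptyClosedInvariant f) A) (hB : Minimal (IsNonemptyClosedInvariant f) B)
    (hAB : A ≠ B) : Disjoint A B := by
  by_contra h
  have hAB' : IsNonemptyClosedInvariant f (A ∩ B) := ⟨not_disjoint_iff_nonempty_inter.mp h,
    hA.prop.2.1.inter hB.prop.2.1, hA.prop.2.2.inter_inter hB.prop.2.2⟩
  exact hAB ((hA.eq_of_subset hAB' inter_subset_left).symm.trans
    (hB.eq_of_subset hAB' inter_subset_right))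

lemma Minimal.image_homeomorph {f : X → X} {f' : Y → Y} (e : X ≃ₜ Y) (he : Semiconj e f f')
    {A : Set X} (hA : Minimal (IsNonemptyClosedInvariant f) A) :
    Minimal (IsNonemptyClosedInvariant f') (e '' A) := by
  refine ⟨⟨hA.prop.1.image e, e.isClosedMap A hA.prop.2.1, he.mapsTo_image hA.prop.2.2⟩,
    fun B hB hBA => image_subset_iff.mpr (hA.2 ?_ ?_)⟩
  · exact ⟨hB.1.preimage e.surjective, hB.2.1.preimage e.continuous, he.mapsTo_preimage hB.2.2⟩
  · exact (preimage_mono hBA).trans (e.preimage_image A).subset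

lemma IsMinimalSet.eq_of_subset {g : Y → Y} {Z B : Set Y} (hZ : IsMinimalSet g Z)
    (hB : IsNonemptyClosedInvariant g B) (hBZ : B ⊆ Z) : B = Z := by
  obtain ⟨b, hb⟩ := hB.1
  refine hBZ.antisymm ((hZ.2.2.2 b (hBZ hb)).trans ?_)
  exact closure_minimal (fwdOrbit_subset hB.2.2 hb) hB.2.1

lemma IsMinimalSet.image_eq [T2Space Y] {f : X → X} {g : Y → Y} {p : X → Y}
    (hp : Continuous p) (hpf : Semiconj p f g) {Z : Set Y} (hZ : IsMinimalSet g Z) {A : Set X}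
    (hAc : IsCompact A) (hA : IsNonemptyClosedInvariant f A) (hAZ : p '' A ⊆ Z) : p '' A = Z :=
  hZ.eq_of_subset ⟨hA.1.image p, (hAc.image hp).isClosed, hpf.mapsTo_image hA.2.2⟩ hAZ

end MinimalSets

lemma exists_zsmul_vadd_eq_zsmul_vadd_iff {G α : Type*} [AddGroup G] [AddAction G α] (t : G)
    (a : α) {k : ℕ} (hk : 0 < k) (ha : (k : ℤ) • t +ᵥ a = a) :
    ∃ m : ℕ, 0 < m ∧ m ∣ k ∧ ∀ i j : ℤ, i • t +ᵥ a = j • t +ᵥ a ↔ (i : ZMod m) = j := by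
  obtain ⟨c, hc⟩ := Int.subgroup_cyclic ((AddAction.stabilizer G a).comap (zmultiplesHom G t))
  have hmem : ∀ i : ℤ, i • t +ᵥ a = a ↔ (c.natAbs : ℤ) ∣ i := by
    intro i
    rw [← Int.mem_zmultiples_iff, Int.zmultiples_natAbs, AddSubgroup.zmultiples_eq_closure, ← hc]
    rfl
  have hck : c.natAbs ∣ k := Int.natCast_dvd_natCast.mp ((hmem k).mp ha)
  refine ⟨c.natAbs, Nat.pos_of_dvd_of_pos hck hk, hck, fun i j => ?_⟩
  rw [ZMod.intCast_eq_intCast_iff_dvd_sub, ← hmem, vadd_eq_iff_eq_neg_vadd, vadd_vadd, ← neg_zsmul,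
    ← add_zsmul, neg_add_eq_sub, eq_comm]

lemma map_add_intCast_of_map_add_one {f : ℝ → ℝ} (hf : ∀ x, f (x + 1) = f x + 1) (j : ℤ)
    (x : ℝ) : f (x + j) = f x + j := by
  induction j using Int.induction_on generalizing x with
  | zero => simp
  | succ n ih => rw [Int.cast_add, Int.cast_one, ← add_assoc, hf, ih, add_assoc]
  | pred n ih =>
    have h := hf (x + ((-n - 1 : ℤ) : ℝ))
    rw [show x + ((-n - 1 : ℤ) : ℝ) + 1 = x + ((-n : ℤ) : ℝ) by push_cast; ring, ih] at h
    push_cast at h ⊢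
    linarith

namespace CircleK

variable {k : ℕ}

lemma mkk_surjective : Surjective (mkk k) := QuotientAddGroup.mk_surjective

lemma isQuotientMap_mkk : IsQuotientMap (mkk k) :=
  QuotientAddGroup.isOpenQuotientMap_mk.isQuotientMap

lemma zsmul_mkk_one (j : ℤ) : j • mkk k 1 = mkk k j := by
  simp [mkk, ← AddCircle.coe_zsmul]

lemma natCast_zsmul_mkk_one : (k : ℤ) • mkk k 1 = 0 := by
  rw [zsmul_mkk_one, Int.cast_natCast, mkk, AddCircle.coe_period]

lemma mkk_add (a b : ℝ) : mkk k (a + b) = mkk k a + mkk k b := rfl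

lemma piK_mkk (a : ℝ) : piK k (mkk k a) = mk1 a := rfl

lemma continuous_piK : Continuous (piK k) :=
  isQuotientMap_mkk.continuous_iff.mpr QuotientAddGroup.continuous_mk

lemma piK_surjective : Surjective (piK k) := by
  intro y
  obtain ⟨a, rfl⟩ := QuotientAddGroup.mk_surjective y
  exact ⟨mkk k a, rfl⟩

lemma piK_mkk_intCast_add (j : ℤ) (x : CircleK k) : piK k (mkk k j + x) = piK k x := by
  obtain ⟨a, rfl⟩ := mkk_surjective x
  rw [← mkk_add, piK_mkk, piK_mkk]
  exact QuotientAddGroup.eq_iff_sub_mem.mpr (AddSubgroup.mem_zmultiples_iff.mpr ⟨j, by simp⟩)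

lemma exists_eq_mkk_intCast_add_of_piK_eq {x y : CircleK k} (h : piK k x = piK k y) :
    ∃ j : ℤ, x = mkk k j + y := by
  obtain ⟨a, rfl⟩ := mkk_surjective x
  obtain ⟨b, rfl⟩ := mkk_surjective y
  obtain ⟨j, hj⟩ := AddSubgroup.mem_zmultiples_iff.mp (QuotientAddGroup.eq_iff_sub_mem.mp h)
  refine ⟨j, ?_⟩
  rw [← mkk_add]
  congr 1
  rw [zsmul_one, AddMonoidHom.id_apply, AddMonoidHom.id_apply] at hj
  linarith

lemma image_TK (A : Set (CircleK k)) : TK k '' A = mkk k 1 +ᵥ A := by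
  ext
  simp [TK, mem_vadd_set, add_comm]

lemma piK_image_mkk_intCast_vadd (j : ℤ) (A : Set (CircleK k)) :
    piK k '' (mkk k j +ᵥ A) = piK k '' A := by
  rw [← image_vadd, image_image]
  simp only [vadd_eq_add, piK_mkk_intCast_add]

lemma preimage_piK_image (A : Set (CircleK k)) :
    piK k ⁻¹' (piK k '' A) = ⋃ j : ℤ, mkk k j +ᵥ A := by
  ext x
  simp only [mem_preimage, mem_image, mem_iUnion, mem_vadd_set, vadd_eq_add]
  constructor
  · rintro ⟨y, hy, hyx⟩
    obtain ⟨j, rfl⟩ := exists_eq_mkk_intCast_add_of_piK_eq hyx.symm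
    exact ⟨j, y, hy, rfl⟩
  · rintro ⟨j, y, hy, rfl⟩
    exact ⟨y, hy, (piK_mkk_intCast_add j y).symm⟩

variable {g : Circle1 → Circle1} {gt : ℝ → ℝ} {gk : CircleK k → CircleK k}

lemma continuous_of_lift (hcont : Continuous gt) (hgk : ∀ x, gk (mkk k x) = mkk k (gt x)) :
    Continuous gk := by
  rw [isQuotientMap_mkk.continuous_iff, show gk ∘ mkk k = mkk k ∘ gt from funext hgk]
  exact QuotientAddGroup.continuous_mk.comp hcont

lemma semiconj_piK (hlift : ∀ x, g (mk1 x) = mk1 (gt x))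
    (hgk : ∀ x, gk (mkk k x) = mkk k (gt x)) : Semiconj (piK k) gk g := by
  intro x
  obtain ⟨a, rfl⟩ := mkk_surjective x
  rw [hgk, piK_mkk, piK_mkk, hlift]

lemma semiconj_mkk_intCast_add (hdeg : ∀ x, gt (x + 1) = gt x + 1)
    (hgk : ∀ x, gk (mkk k x) = mkk k (gt x)) (j : ℤ) : Semiconj (mkk k j + ·) gk gk := by
  intro x
  obtain ⟨a, rfl⟩ := mkk_surjective x
  simp only
  rw [← mkk_add, hgk, hgk, ← mkk_add, add_comm (j : ℝ) a, map_add_intCast_of_map_add_one hdeg,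
    add_comm]

lemma minimal_mkk_intCast_vadd (hdeg : ∀ x, gt (x + 1) = gt x + 1)
    (hgk : ∀ x, gk (mkk k x) = mkk k (gt x)) {A : Set (CircleK k)}
    (hA : Minimal (IsNonemptyClosedInvariant gk) A) (j : ℤ) :
    Minimal (IsNonemptyClosedInvariant gk) (mkk k j +ᵥ A) := by
  rw [← image_vadd]
  exact hA.image_homeomorph (Homeomorph.addLeft (mkk k j)) (semiconj_mkk_intCast_add hdeg hgk j)

end CircleK

/-- The full lift to the k-fold cover of a minimal set of a
degree-one circle map decomposes into m minimal sets permuted cyclically by the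
deck transformation, where m divides k. -/
theorem statement0 (k : ℕ) (hk : 1 ≤ k)
    (g : Circle1 → Circle1) (gt : ℝ → ℝ)
    (hcont : Continuous gt) (hdeg : ∀ x, gt (x + 1) = gt x + 1)
    (hlift : ∀ x, g (mk1 x) = mk1 (gt x))
    (gk : CircleK k → CircleK k) (hgk : ∀ x, gk (mkk k x) = mkk k (gt x))
    (Z : Set Circle1) (hZ : IsMinimalSet g Z) :
    ∃ m : ℕ, 0 < m ∧ m ∣ k ∧ ∃ Z' : ZMod m → Set (CircleK k),
      Pairwise (Function.onFun Disjoint Z') ∧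
      piK k ⁻¹' Z = ⋃ j, Z' j ∧
      (∀ j, IsMinimalSet gk (Z' j)) ∧
      (∀ j, piK k '' Z' j = Z) ∧
      (∀ j, TK k '' Z' j = Z' (j + 1)) := by
  have : Fact (0 < (k : ℝ)) := ⟨by exact_mod_cast hk⟩
  have hsemi := CircleK.semiconj_piK hlift hgk
  have hW : IsNonemptyClosedInvariant gk (piK k ⁻¹' Z) :=
    ⟨hZ.1.preimage CircleK.piK_surjective, hZ.2.1.isClosed.preimage CircleK.continuous_piK,
      hsemi.mapsTo_preimage hZ.2.2.1⟩
  obtain ⟨Z₀, hZ₀W, hZ₀⟩ := exists_minimal_isNonemptyClosedInvariant_subset hW.2.1.isCompact hW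
  have hproj : piK k '' Z₀ = Z := hZ.image_eq CircleK.continuous_piK hsemi
    hZ₀.prop.2.1.isCompact hZ₀.prop (image_subset_iff.mpr hZ₀W)
  set S : ℤ → Set (CircleK k) := fun j => mkk k j +ᵥ Z₀
  obtain ⟨m, hm, hmk, hS⟩ : ∃ m : ℕ, 0 < m ∧ m ∣ k ∧ ∀ i j : ℤ, S i = S j ↔ (i : ZMod m) = j := by
    simpa only [CircleK.zsmul_mkk_one] using
      exists_zsmul_vadd_eq_zsmul_vadd_iff (mkk k 1) Z₀ hk
        (by rw [CircleK.natCast_zsmul_mkk_one, zero_vadd])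
  have : NeZero m := ⟨hm.ne'⟩
  have hSval : ∀ j : ℤ, S ((j : ZMod m).val : ℤ) = S j := fun j => (hS _ _).mpr (by simp)
  have hmin (j : ℤ) : Minimal (IsNonemptyClosedInvariant gk) (S j) :=
    CircleK.minimal_mkk_intCast_vadd hdeg hgk hZ₀ j
  refine ⟨m, hm, hmk, fun j => S j.val, fun i j hij => (hmin _).disjoint_of_ne (hmin _) ?_, ?_,
    fun j => (hmin _).isMinimalSet (CircleK.continuous_of_lift hcont hgk),
    fun j => (CircleK.piK_image_mkk_intCast_vadd _ _).trans hproj, fun j => ?_⟩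
  · rw [Ne, hS]
    simpa using hij
  · rw [← hproj, CircleK.preimage_piK_image, ← ZMod.intCast_surjective.iUnion_comp]
    simp only [hSval]
    rfl
  · show TK k '' (mkk k (j.val : ℤ) +ᵥ Z₀) = S ((j + 1).val : ℤ)
    rw [CircleK.image_TK, vadd_vadd, ← CircleK.mkk_add,
      show (1 : ℝ) + ((j.val : ℤ) : ℝ) = ((1 + j.val : ℤ) : ℝ) by push_cast; ring]
    exact (hS (1 + j.val) ((j + 1).val)).mpr (by push_cast; simp [add_comm])
end

section
/- Let g : S¹ → S¹ be a continuous degree-one circle map with lift g̃ and induced lift g_k : S_k → S_k (k ≥ 1 finite). Suppose x ∈ S¹ is a periodic point of g of rotation type (p,q), i.e. x has minimal period q and some lift x' ∈ ℝ of x satisfies g̃^q(x') = x' + p. Let m = gcd(k,p). Then the full preimage π_k⁻¹({gⁿ(x) : n ≥ 0}) ⊆ S_k is the disjoint union of exactly m distinct periodic orbits of g_k, each of minimal period kq/m, and T_k permutes these m orbits cyclically. -/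
open Set Filter Topology MeasureTheory Function
open scoped ENNReal Classical

/-!
Fix a lift `x'` of `x`; the fibre of `π_k` over `x` consists of the points `x' + a`, `a ∈ ℤ`.
Since `x` has minimal period `q`, `g_kⁿ` can send `x' + b` to `x' + a` only when `n = q t`, and
then `g̃^{qt}(x') = x' + t p`, so this happens iff `a ≡ b + t p (mod k)` for some `t ≥ 0`. By
Bézout, such `t` exists iff `a ≡ b (mod gcd(p, k))`: the fibre splits into `gcd(p, k)` orbits,
and (taking `a = b`) each point returns exactly at the multiples of `q k / gcd(p, k)`. The deck
transformation sends `x' + a` to `x' + (a + 1)`, so it moves each orbit to the next one.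
-/

theorem AddCircle.coe_eq_coe_iff_exists_int {T a b : ℝ} :
    (a : AddCircle T) = b ↔ ∃ s : ℤ, b = a + s * T := by
  rw [QuotientAddGroup.eq, AddSubgroup.mem_zmultiples_iff]
  simp only [zsmul_eq_mul]
  exact exists_congr fun s => by constructor <;> intro h <;> linarith

theorem Int.dvd_mul_iff_div_gcd_dvd {a b t : ℤ} (hb : b ≠ 0) :
    b ∣ t * a ↔ b / Int.gcd a b ∣ t := by
  rw [← Int.dvd_mul_gcd_iff_dvd_mul, Int.gcd_comm]
  have hgcd : ((Int.gcd a b : ℕ) : ℤ) ≠ 0 := by exact_mod_cast Int.gcd_ne_zero_right hb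
  nth_rw 1 [← Int.ediv_mul_cancel (Int.gcd_dvd_right a b)]
  exact mul_dvd_mul_iff_right hgcd

theorem Int.exists_nat_dvd_sub_mul_iff {a b c : ℤ} (hb : b ≠ 0) :
    (∃ t : ℕ, b ∣ c - t * a) ↔ (Int.gcd a b : ℤ) ∣ c := by
  constructor
  · rintro ⟨t, ht⟩
    simpa using dvd_add ((Int.gcd_dvd_right a b).trans ht) ((Int.gcd_dvd_left a b).mul_left t)
  · rintro ⟨d, rfl⟩
    refine ⟨(a.gcdA b * d % b).toNat, ?_⟩
    rw [Int.toNat_of_nonneg (Int.emod_nonneg _ hb), Int.gcd_eq_gcd_ab, Int.emod_def]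
    exact ⟨a.gcdB b * d + a.gcdA b * d / b * a, by ring⟩

section fwdOrbit

variable {X : Type*} {f : X → X} {u v : X}

theorem fwdOrbit_subset_of_mem (h : v ∈ fwdOrbit f u) : fwdOrbit f v ⊆ fwdOrbit f u := by
  rintro _ ⟨i, rfl⟩
  obtain ⟨n, rfl⟩ := h
  exact ⟨i + n, iterate_add_apply f i n u⟩

theorem mem_fwdOrbit_of_mem_of_mem_periodicPts (hu : u ∈ periodicPts f)
    (h : v ∈ fwdOrbit f u) : u ∈ fwdOrbit f v := by
  obtain ⟨N, hN, hper⟩ := hu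
  obtain ⟨n, rfl⟩ := h
  refine ⟨N * n - n, ?_⟩
  change f^[N * n - n] (f^[n] u) = u
  rw [← iterate_add_apply, Nat.sub_add_cancel (Nat.le_mul_of_pos_left n hN)]
  exact hper.mul_const n

theorem mem_fwdOrbit_of_not_disjoint (hu : u ∈ periodicPts f)
    (h : ¬Disjoint (fwdOrbit f u) (fwdOrbit f v)) : u ∈ fwdOrbit f v := by
  obtain ⟨z, hzu, hzv⟩ := Set.not_disjoint_iff.mp h
  exact fwdOrbit_subset_of_mem hzv (mem_fwdOrbit_of_mem_of_mem_periodicPts hu hzu)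

theorem Function.Commute.image_fwdOrbit {T : X → X} (h : Function.Commute f T) (u : X) :
    T '' fwdOrbit f u = fwdOrbit f (T u) := by
  rw [fwdOrbit, fwdOrbit, ← Set.range_comp]
  exact congrArg Set.range (funext fun n => h.symm.iterate_right n u)

end fwdOrbit

section DegreeOneLift

variable {k : ℕ} {gt : ℝ → ℝ} {g : Circle1 → Circle1} {gk : CircleK k → CircleK k}

theorem commute_add_intCast (hdeg : ∀ x, gt (x + 1) = gt x + 1) (j : ℤ) :
    Function.Commute gt (· + (j : ℝ)) := by
  have hnat : ∀ (n : ℕ) (x : ℝ), gt (x + n) = gt x + n := by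
    intro n
    induction n with
    | zero => simp
    | succ n ih => intro x; push_cast; rw [← add_assoc, hdeg, ih, add_assoc]
  intro x
  obtain ⟨n, rfl | rfl⟩ := Int.eq_nat_or_neg j
  · simpa using hnat n x
  · have h := hnat n (x + -n)
    simp only [Int.cast_neg, Int.cast_natCast, neg_add_cancel_right] at h ⊢
    linarith

theorem iterate_add_intCast (hdeg : ∀ x, gt (x + 1) = gt x + 1) (n : ℕ) (x : ℝ) (j : ℤ) :
    gt^[n] (x + j) = gt^[n] x + j :=
  (commute_add_intCast hdeg j).iterate_left n x

theorem iterate_mul_of_iterate_eq_add (hdeg : ∀ x, gt (x + 1) = gt x + 1) {q : ℕ} {p : ℤ}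
    {x : ℝ} (hx : gt^[q] x = x + p) (t : ℕ) : gt^[q * t] x = x + t * p := by
  induction t with
  | zero => simp
  | succ t ih =>
    rw [mul_add_one, iterate_add_apply, hx, iterate_add_intCast hdeg, ih]
    push_cast
    ring

theorem semiconj_piK (hgk : ∀ x, gk (mkk k x) = mkk k (gt x))
    (hlift : ∀ x, g (mk1 x) = mk1 (gt x)) : Semiconj (piK k) gk g := by
  intro z
  induction z using QuotientAddGroup.induction_on with
  | H x => exact (congrArg (piK k) (hgk x)).trans (hlift x).symm

theorem commute_TK (hdeg : ∀ x, gt (x + 1) = gt x + 1)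
    (hgk : ∀ x, gk (mkk k x) = mkk k (gt x)) :
    Function.Commute gk (TK k) := by
  intro z
  induction z using QuotientAddGroup.induction_on with
  | H x =>
    change gk (mkk k (x + 1)) = gk (mkk k x) + mkk k 1
    rw [hgk, hgk, hdeg]
    rfl

def fiberPt (k : ℕ) (x' : ℝ) (a : ℤ) : CircleK k := mkk k (x' + a)

theorem fiberPt_eq_fiberPt_iff {x' : ℝ} {a b : ℤ} :
    fiberPt k x' a = fiberPt k x' b ↔ (k : ℤ) ∣ b - a := by
  refine AddCircle.coe_eq_coe_iff_exists_int.trans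
    ⟨fun ⟨s, hs⟩ => ⟨s, ?_⟩, fun ⟨s, hs⟩ => ⟨s, ?_⟩⟩
  · exact_mod_cast (by linarith : (b : ℝ) - a = k * s)
  · have hs' : (b : ℝ) - a = k * s := by exact_mod_cast hs
    linarith

theorem piK_fiberPt (x' : ℝ) (a : ℤ) : piK k (fiberPt k x' a) = mk1 x' := by
  change mk1 (x' + a) = mk1 x'
  exact AddCircle.coe_eq_coe_iff_exists_int.mpr ⟨-a, by push_cast; ring⟩

theorem TK_fiberPt (x' : ℝ) (a : ℤ) : TK k (fiberPt k x' a) = fiberPt k x' (a + 1) := by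
  change mkk k (x' + a + 1) = _
  rw [fiberPt, Int.cast_add, Int.cast_one, add_assoc]

theorem iterate_fiberPt (hdeg : ∀ x, gt (x + 1) = gt x + 1)
    (hgk : ∀ x, gk (mkk k x) = mkk k (gt x)) (n : ℕ) (x' : ℝ) (a : ℤ) :
    gk^[n] (fiberPt k x' a) = mkk k (gt^[n] x' + a) := by
  rw [fiberPt, ← (Semiconj.iterate_right (fun x => (hgk x).symm) n) (x' + a),
    iterate_add_intCast hdeg]

theorem iterate_mul_fiberPt (hdeg : ∀ x, gt (x + 1) = gt x + 1)
    (hgk : ∀ x, gk (mkk k x) = mkk k (gt x)) {x' : ℝ} {p : ℤ} {q : ℕ}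
    (hx' : gt^[q] x' = x' + p) (t : ℕ) (b : ℤ) :
    gk^[q * t] (fiberPt k x' b) = fiberPt k x' (b + t * p) := by
  rw [iterate_fiberPt hdeg hgk, iterate_mul_of_iterate_eq_add hdeg hx', fiberPt]
  congr 1
  push_cast
  ring

end DegreeOneLift

section PeriodicFiber

variable {k : ℕ} {gt : ℝ → ℝ} {g : Circle1 → Circle1} {gk : CircleK k → CircleK k}
  {x' : ℝ} {p : ℤ} {q : ℕ}

theorem iterate_fiberPt_eq_fiberPt_iff (hdeg : ∀ x, gt (x + 1) = gt x + 1)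
    (hgk : ∀ x, gk (mkk k x) = mkk k (gt x)) (hlift : ∀ x, g (mk1 x) = mk1 (gt x))
    (hper : minimalPeriod g (mk1 x') = q) (hx' : gt^[q] x' = x' + p) {n : ℕ} {a b : ℤ} :
    gk^[n] (fiberPt k x' b) = fiberPt k x' a ↔
      ∃ t : ℕ, n = q * t ∧ (k : ℤ) ∣ a - b - t * p := by
  constructor
  · intro h
    have hqn : q ∣ n := by
      rw [← hper]
      apply IsPeriodicPt.minimalPeriod_dvd
      have h' := congrArg (piK k) h
      rwa [(semiconj_piK hgk hlift).iterate_right, piK_fiberPt, piK_fiberPt] at h'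
    obtain ⟨t, rfl⟩ := hqn
    rw [iterate_mul_fiberPt hdeg hgk hx', fiberPt_eq_fiberPt_iff, ← sub_sub] at h
    exact ⟨t, rfl, h⟩
  · rintro ⟨t, rfl, h⟩
    rwa [iterate_mul_fiberPt hdeg hgk hx', fiberPt_eq_fiberPt_iff, ← sub_sub]

theorem fiberPt_mem_fwdOrbit_iff (hdeg : ∀ x, gt (x + 1) = gt x + 1)
    (hgk : ∀ x, gk (mkk k x) = mkk k (gt x)) (hlift : ∀ x, g (mk1 x) = mk1 (gt x))
    (hper : minimalPeriod g (mk1 x') = q) (hx' : gt^[q] x' = x' + p) (hk : k ≠ 0) {a b : ℤ} :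
    fiberPt k x' a ∈ fwdOrbit gk (fiberPt k x' b) ↔ (b : ZMod (Int.gcd p k)) = a := by
  rw [ZMod.intCast_eq_intCast_iff_dvd_sub,
    ← Int.exists_nat_dvd_sub_mul_iff (by exact_mod_cast hk)]
  simp only [fwdOrbit, Set.mem_range, iterate_fiberPt_eq_fiberPt_iff hdeg hgk hlift hper hx']
  exact ⟨fun ⟨_, t, _, ht⟩ => ⟨t, ht⟩, fun ⟨t, ht⟩ => ⟨q * t, t, rfl, ht⟩⟩

theorem isPeriodicPt_fiberPt_iff (hdeg : ∀ x, gt (x + 1) = gt x + 1)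
    (hgk : ∀ x, gk (mkk k x) = mkk k (gt x)) (hlift : ∀ x, g (mk1 x) = mk1 (gt x))
    (hper : minimalPeriod g (mk1 x') = q) (hx' : gt^[q] x' = x' + p) (hk : k ≠ 0) {n : ℕ}
    (a : ℤ) : IsPeriodicPt gk n (fiberPt k x' a) ↔ q * (k / Int.gcd p k) ∣ n := by
  have hk' : (k : ℤ) ≠ 0 := by exact_mod_cast hk
  simp_rw [IsPeriodicPt, IsFixedPt, iterate_fiberPt_eq_fiberPt_iff hdeg hgk hlift hper hx',
    sub_self, zero_sub, dvd_neg, Int.dvd_mul_iff_div_gcd_dvd hk', ← Int.natCast_div,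
    Int.natCast_dvd_natCast]
  constructor
  · rintro ⟨t, rfl, s, rfl⟩
    exact ⟨s, by ring⟩
  · rintro ⟨s, rfl⟩
    exact ⟨k / Int.gcd p k * s, by ring, dvd_mul_right _ _⟩

theorem minimalPeriod_fiberPt (hdeg : ∀ x, gt (x + 1) = gt x + 1)
    (hgk : ∀ x, gk (mkk k x) = mkk k (gt x)) (hlift : ∀ x, g (mk1 x) = mk1 (gt x))
    (hper : minimalPeriod g (mk1 x') = q) (hx' : gt^[q] x' = x' + p) (hk : k ≠ 0) (a : ℤ) :
    minimalPeriod gk (fiberPt k x' a) = k * q / Int.gcd p k := by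
  have hdvd : Int.gcd p k ∣ k := Int.natCast_dvd_natCast.mp (Int.gcd_dvd_right p k)
  refine Nat.dvd_right_iff_eq.mp fun n => ?_
  rw [← isPeriodicPt_iff_minimalPeriod_dvd, isPeriodicPt_fiberPt_iff hdeg hgk hlift hper hx' hk,
    mul_comm k, Nat.mul_div_assoc q hdvd]

theorem fiberPt_mem_periodicPts (hdeg : ∀ x, gt (x + 1) = gt x + 1)
    (hgk : ∀ x, gk (mkk k x) = mkk k (gt x)) (hlift : ∀ x, g (mk1 x) = mk1 (gt x))
    (hper : minimalPeriod g (mk1 x') = q) (hx' : gt^[q] x' = x' + p) (hq : 0 < q) (hk : k ≠ 0)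
    (a : ℤ) : fiberPt k x' a ∈ periodicPts gk := by
  have hdvd : Int.gcd p k ∣ k := Int.natCast_dvd_natCast.mp (Int.gcd_dvd_right p k)
  refine ⟨q * k, Nat.mul_pos hq (Nat.pos_of_ne_zero hk), ?_⟩
  exact (isPeriodicPt_fiberPt_iff hdeg hgk hlift hper hx' hk a).mpr
    (mul_dvd_mul_left q (Nat.div_dvd_of_dvd hdvd))

theorem preimage_fwdOrbit_eq_iUnion (hdeg : ∀ x, gt (x + 1) = gt x + 1)
    (hgk : ∀ x, gk (mkk k x) = mkk k (gt x)) (hlift : ∀ x, g (mk1 x) = mk1 (gt x)) (x' : ℝ) :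
    piK k ⁻¹' fwdOrbit g (mk1 x') = ⋃ a : ℤ, fwdOrbit gk (fiberPt k x' a) := by
  ext z
  induction z using QuotientAddGroup.induction_on with
  | H w =>
    simp only [Set.mem_preimage, Set.mem_iUnion, fwdOrbit, Set.mem_range]
    constructor
    · rintro ⟨n, hn⟩
      rw [← (Semiconj.iterate_right (fun x => (hlift x).symm) n)] at hn
      obtain ⟨s, rfl⟩ := AddCircle.coe_eq_coe_iff_exists_int.mp hn
      exact ⟨s, n, by rw [iterate_fiberPt hdeg hgk, mul_one]; rfl⟩
    · rintro ⟨a, n, hn⟩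
      refine ⟨n, ?_⟩
      rw [← piK_fiberPt (k := k) x' a, ← (semiconj_piK hgk hlift).iterate_right, hn]

end PeriodicFiber

theorem statement1_general (k : ℕ) (hk : 1 ≤ k)
    (g : Circle1 → Circle1) (gt : ℝ → ℝ)
    (hdeg : ∀ x, gt (x + 1) = gt x + 1)
    (hlift : ∀ x, g (mk1 x) = mk1 (gt x))
    (gk : CircleK k → CircleK k) (hgk : ∀ x, gk (mkk k x) = mkk k (gt x))
    (x : Circle1) (p : ℤ) (q : ℕ) (hq : 0 < q)
    (hper : Function.minimalPeriod g x = q)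
    (hrot : ∃ x' : ℝ, mk1 x' = x ∧ gt^[q] x' = x' + p) :
    ∃ y : ZMod (Int.gcd p k) → CircleK k,
      Pairwise (Function.onFun Disjoint fun j => fwdOrbit gk (y j)) ∧
      piK k ⁻¹' fwdOrbit g x = ⋃ j, fwdOrbit gk (y j) ∧
      (∀ j, Function.minimalPeriod gk (y j) = k * q / Int.gcd p k) ∧
      (∀ j, TK k '' fwdOrbit gk (y j) = fwdOrbit gk (y (j + 1))) := by
  obtain ⟨x', rfl, hx'⟩ := hrot
  have hk0 : k ≠ 0 := Nat.one_le_iff_ne_zero.mp hk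
  have : NeZero (Int.gcd p k) := ⟨Int.gcd_ne_zero_right (by exact_mod_cast hk0)⟩
  have hmem {a b : ℤ} := fiberPt_mem_fwdOrbit_iff hdeg hgk hlift hper hx' hk0 (a := a) (b := b)
  have horbit {a b : ℤ} (h : (a : ZMod (Int.gcd p k)) = b) :
      fwdOrbit gk (fiberPt k x' a) = fwdOrbit gk (fiberPt k x' b) :=
    (fwdOrbit_subset_of_mem (hmem.mpr h.symm)).antisymm (fwdOrbit_subset_of_mem (hmem.mpr h))
  have hval (j : ZMod (Int.gcd p k)) : ((j.val : ℤ) : ZMod (Int.gcd p k)) = j := by simp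
  refine ⟨fun j => fiberPt k x' j.val, fun i j hij => ?_, ?_,
    fun j => minimalPeriod_fiberPt hdeg hgk hlift hper hx' hk0 _, fun j => ?_⟩
  · contrapose hij
    have h := hmem.mp (mem_fwdOrbit_of_not_disjoint
      (fiberPt_mem_periodicPts hdeg hgk hlift hper hx' hq hk0 _) hij)
    rwa [hval, hval, eq_comm] at h
  · rw [preimage_fwdOrbit_eq_iUnion hdeg hgk hlift]
    refine Set.Subset.antisymm (Set.iUnion_subset fun a => ?_)
      (Set.iUnion_subset fun j => Set.subset_iUnion_of_subset (j.val : ℤ) subset_rfl)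
    rw [horbit (a := a) (b := ((a : ZMod (Int.gcd p k)).val : ℤ)) (by rw [hval])]
    exact Set.subset_iUnion_of_subset (a : ZMod (Int.gcd p k)) subset_rfl
  · rw [(commute_TK hdeg hgk).image_fwdOrbit, TK_fiberPt]
    exact horbit (by simp)

/-- The full preimage in the k-fold cover of a periodic orbit of
rotation type (p,q) consists of gcd(k,p) periodic orbits of minimal period
kq/gcd(k,p), permuted cyclically by the deck transformation. -/
theorem statement1 (k : ℕ) (hk : 1 ≤ k)
    (g : Circle1 → Circle1) (gt : ℝ → ℝ)
    (hcont : Continuous gt) (hdeg : ∀ x, gt (x + 1) = gt x + 1)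
    (hlift : ∀ x, g (mk1 x) = mk1 (gt x))
    (gk : CircleK k → CircleK k) (hgk : ∀ x, gk (mkk k x) = mkk k (gt x))
    (x : Circle1) (p : ℤ) (q : ℕ) (hq : 0 < q)
    (hper : Function.minimalPeriod g x = q)
    (hrot : ∃ x' : ℝ, mk1 x' = x ∧ gt^[q] x' = x' + p) :
    ∃ y : ZMod (Int.gcd p k) → CircleK k,
      Pairwise (Function.onFun Disjoint fun j => fwdOrbit gk (y j)) ∧
      piK k ⁻¹' fwdOrbit g x = ⋃ j, fwdOrbit gk (y j) ∧
      (∀ j, Function.minimalPeriod gk (y j) = k * q / Int.gcd p k) ∧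
      (∀ j, TK k '' fwdOrbit gk (y j) = fwdOrbit gk (y (j + 1))) :=
  statement1_general k hk g gt hdeg hlift gk hgk x p q hq hper hrot
end

section
/- Let h̃ be a semi-monotone degree-one lift descending to h : S¹ → S¹, suppose h has exactly ℓ flat spots J₁,…,J_ℓ, and on P(h) = S¹ minus the interiors of the flat spots h is C¹ with one-sided derivatives > 1. If the rotation number ρ(h̃) = p/q with gcd(p,q) = 1, then the number of distinct periodic orbits of h that are wholly contained in P(h) is at least one and at most ℓ. -/
/-!
Put `G = ht^[q] - p`. Because `ρ = p/q` in lowest terms, `G` has fixed points (its translation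
number is `0`), and every periodic point of `h` has a least period divisible by `q` and lifts to a
fixed point of `G`. At a fixed point of `G` whose orbit enters the interior of a flat spot, `G` is
locally constant, so its graph crosses the diagonal there downwards. Since `G` has degree one, the
graph also crosses upwards somewhere, and that fixed point has its whole orbit in `P(h)`.

If `u < v` are lifts of points on such orbits, both move by exactly `p` after `q` steps. As `ht`
expands on `P(h)`, some `ht^[j]` with `j < q` must map `[u, v]` across a whole integer translate
of a flat spot `J_i`. Consecutive lifts in one period get distinct labels `(j, i)`, so there are
at most `q ℓ` such points on the circle, and each orbit has at least `q` of them.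
-/
open Set Filter Topology MeasureTheory Function
open scoped ENNReal Classical

noncomputable section

/-- The positive-slope region P(h) in ℝ: the complement of the interiors of all
the (translated) flat spots. -/
def flatComplR {l : ℕ} (a b : Fin l → ℝ) : Set ℝ :=
  {x | ∀ (i : Fin l) (n : ℤ), x ∉ Set.Ioo (a i + n) (b i + n)}

/-- The positive-slope region P(h) in the circle: the complement of the interiors
of the flat spots. -/
def flatComplC {l : ℕ} (a b : Fin l → ℝ) : Set Circle1 :=
  (⋃ i, mk1 '' Set.Ioo (a i) (b i))ᶜ

end

namespace IsSemiMonotoneLift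

variable {ht : ℝ → ℝ}

def toCircleDeg1Lift (hsm : IsSemiMonotoneLift ht) : CircleDeg1Lift := ⟨⟨ht, hsm.2.1⟩, hsm.2.2⟩

@[simp]
lemma coe_toCircleDeg1Lift_pow (hsm : IsSemiMonotoneLift ht) (n : ℕ) :
    ⇑(hsm.toCircleDeg1Lift ^ n) = ht^[n] := by
  rw [CircleDeg1Lift.coe_pow]
  rfl

lemma iterate_add_int (hsm : IsSemiMonotoneLift ht) (n : ℕ) (x : ℝ) (m : ℤ) :
    ht^[n] (x + m) = ht^[n] x + m := by
  have := (hsm.toCircleDeg1Lift ^ n).map_add_int x m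
  rwa [coe_toCircleDeg1Lift_pow] at this

lemma translationNumber_eq (hsm : IsSemiMonotoneLift ht) {ρ : ℝ} (hrot : HasRotNum ht ρ) :
    hsm.toCircleDeg1Lift.translationNumber = ρ :=
  tendsto_nhds_unique (by simpa using hsm.toCircleDeg1Lift.tendsto_translationNumber 0) (hrot 0)

lemma exists_iterate_eq_add (hsm : IsSemiMonotoneLift ht) {p : ℤ} {q : ℕ} (hq : 0 < q)
    (hrot : HasRotNum ht (p / q)) : ∃ x, ht^[q] x = x + p := by
  simpa using (hsm.toCircleDeg1Lift.translationNumber_eq_rat_iff hsm.1 hq).1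
    (hsm.translationNumber_eq hrot)

lemma dvd_and_iterate_eq_add (hsm : IsSemiMonotoneLift ht) {p : ℤ} {q : ℕ} (hq : 0 < q)
    (hcop : Int.gcd p q = 1) (hrot : HasRotNum ht (p / q)) {n : ℕ} (hn : 0 < n) {m : ℤ}
    {x : ℝ} (hx : ht^[n] x = x + m) : q ∣ n ∧ ht^[q] x = x + p := by
  have hτ := hsm.toCircleDeg1Lift.translationNumber_of_map_pow_eq_add_int (by simpa using hx) hn
  rw [hsm.translationNumber_eq hrot, div_eq_div_iff (by positivity) (by positivity)] at hτ
  have hpm : p * n = m * q := by exact_mod_cast hτ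
  obtain ⟨s, rfl⟩ : q ∣ n := by
    have : (q : ℤ) ∣ p * n := ⟨m, by rw [hpm, mul_comm]⟩
    exact_mod_cast (Int.isCoprime_iff_gcd_eq_one.2 (by rwa [Int.gcd_comm])).dvd_of_dvd_mul_left this
  refine ⟨dvd_mul_right q s, ?_⟩
  have hs : 0 < s := Nat.pos_of_mul_pos_left hn
  have hm : m = s * p := by
    have : (q : ℤ) * (s * p) = q * m := by push_cast at hpm; linarith
    exact (mul_left_cancel₀ (by positivity) this).symm
  have := ((hsm.toCircleDeg1Lift ^ q).iterate_pos_eq_iff (x := x) (m := p) hs).1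
  simp only [coe_toCircleDeg1Lift_pow, ← iterate_mul] at this
  exact this (by rw [hx, hm]; push_cast; ring)

end IsSemiMonotoneLift

section FlatSpots

variable {ht : ℝ → ℝ} {l : ℕ} {a b : Fin l → ℝ}

lemma notMem_flatComplR_iff {x : ℝ} :
    x ∉ flatComplR a b ↔ ∃ i, ∃ n : ℤ, x ∈ Ioo (a i + n) (b i + n) := by
  simp [flatComplR]

lemma add_int_mem_flatComplR {x : ℝ} (hx : x ∈ flatComplR a b) (m : ℤ) :
    x + m ∈ flatComplR a b := by
  intro i n hmem
  refine hx i (n - m) ⟨?_, ?_⟩ <;> push_cast <;> linarith [hmem.1, hmem.2]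

lemma mk1_eq_mk1_iff {x y : ℝ} : mk1 x = mk1 y ↔ ∃ m : ℤ, x = y + m := by
  simp only [mk1, QuotientAddGroup.eq, AddSubgroup.mem_zmultiples_iff, zsmul_eq_mul, mul_one]
  constructor
  · rintro ⟨m, hm⟩
    exact ⟨-m, by push_cast; linarith⟩
  · rintro ⟨m, rfl⟩
    exact ⟨-m, by push_cast; ring⟩

lemma mk1_mem_flatComplC_iff {x : ℝ} : mk1 x ∈ flatComplC a b ↔ x ∈ flatComplR a b := by
  rw [← not_iff_not, notMem_flatComplR_iff, flatComplC, notMem_compl_iff, mem_iUnion]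
  refine exists_congr fun i => ⟨?_, ?_⟩
  · rintro ⟨u, hu, hux⟩
    obtain ⟨m, rfl⟩ := mk1_eq_mk1_iff.1 hux.symm
    exact ⟨m, by constructor <;> linarith [hu.1, hu.2]⟩
  · rintro ⟨n, hn⟩
    exact ⟨x - n, ⟨by linarith [hn.1], by linarith [hn.2]⟩, mk1_eq_mk1_iff.2 ⟨-n, by push_cast; ring⟩⟩

lemma IsFlatSpot.apply_eq_of_mem (hsm : IsSemiMonotoneLift ht) {a b : ℝ} (hfs : IsFlatSpot ht a b)
    (n : ℤ) {x y : ℝ} (hx : x ∈ Icc (a + n) (b + n)) (hy : y ∈ Icc (a + n) (b + n)) :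
    ht x = ht y := by
  have key : ∀ z ∈ Icc (a + n) (b + n), ht z = ht a + n := fun z hz => by
    have := hsm.iterate_add_int 1 (z - n) n
    simp only [Function.iterate_one, sub_add_cancel] at this
    rw [this, hfs.2.2.1 _ ⟨by linarith [hz.1], by linarith [hz.2]⟩]
  rw [key x hx, key y hy]

end FlatSpots

lemma sub_lt_sub_of_one_lt_hasDerivWithinAt {f D : ℝ → ℝ} {s : Set ℝ}
    (hD : ∀ x ∈ s, 1 < D x ∧ HasDerivWithinAt f (D x) s x) {u v : ℝ} (huv : u < v)
    (hsub : Icc u v ⊆ s) : v - u < f v - f u := by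
  obtain ⟨c, hc, hslope⟩ := exists_hasDerivAt_eq_slope f D huv
    (fun x hx => ((hD x (hsub hx)).2.continuousWithinAt).mono hsub)
    (fun x hx => ((hD x (hsub (Ioo_subset_Icc_self hx))).2.mono hsub).hasDerivAt
      (Icc_mem_nhds hx.1 hx.2))
  have h1 := (hD c (hsub (Ioo_subset_Icc_self hc))).1
  rw [hslope, lt_div_iff₀ (sub_pos.2 huv), one_mul] at h1
  exact h1

lemma sub_lt_iterate_sub_iterate {f D : ℝ → ℝ} {s : Set ℝ} (hf : Continuous f)
    (hD : ∀ x ∈ s, 1 < D x ∧ HasDerivWithinAt f (D x) s x) {u v : ℝ} (huv : u < v) {q : ℕ}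
    (hq : 0 < q) (hs : ∀ z ∈ Icc u v, ∀ j < q, f^[j] z ∈ s) :
    v - u < f^[q] v - f^[q] u := by
  induction q, hq using Nat.le_induction with
  | base => simpa using sub_lt_sub_of_one_lt_hasDerivWithinAt hD huv fun z hz => hs z hz 0 one_pos
  | succ q hq ih =>
    have ih := ih fun z hz j hj => hs z hz j (by omega)
    have hsub : Icc (f^[q] u) (f^[q] v) ⊆ s := fun w hw => by
      obtain ⟨z, hz, rfl⟩ := intermediate_value_Icc huv.le (hf.iterate q).continuousOn hw
      exact hs z hz q (by omega)
    have := sub_lt_sub_of_one_lt_hasDerivWithinAt hD (by linarith) hsub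
    rw [iterate_succ_apply', iterate_succ_apply']
    linarith

lemma exists_eq_zero_forall_pos_of_le {F : ℝ → ℝ} (hF : Continuous F) {u v : ℝ} (huv : u ≤ v)
    (hu : F u ≤ 0) (hv : 0 < F v) : ∃ z ∈ Ico u v, F z = 0 ∧ ∀ y ∈ Ioc z v, 0 < F y := by
  set S := Icc u v ∩ {y | F y ≤ 0}
  have hSc : IsClosed S := isClosed_Icc.inter (isClosed_le hF continuous_const)
  have hSbdd : BddAbove S := bddAbove_Icc.mono inter_subset_left
  have hz : sSup S ∈ S := hSc.csSup_mem ⟨u, ⟨le_rfl, huv⟩, hu⟩ hSbdd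
  have hzv : sSup S < v := lt_of_le_of_ne hz.1.2 fun h => (h ▸ hz.2).not_gt hv
  have hpos : ∀ y ∈ Ioc (sSup S) v, 0 < F y := fun y hy => not_le.1 fun hFy =>
    hy.1.not_ge (le_csSup hSbdd ⟨⟨hz.1.1.trans hy.1.le, hy.2⟩, hFy⟩)
  refine ⟨sSup S, ⟨hz.1.1, hzv⟩, le_antisymm hz.2 (not_lt.1 fun hneg => ?_), hpos⟩
  obtain ⟨w, hw, hFw⟩ := intermediate_value_Icc hzv.le hF.continuousOn ⟨hneg.le, hv.le⟩
  rcases hw.1.eq_or_lt with rfl | hlt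
  · exact hneg.ne hFw
  · exact (hpos w ⟨hlt, hw.2⟩).ne' hFw

lemma Finset.exists_next_mem_insert {α : Type*} [LinearOrder α] (F : Finset α) {x d : α}
    (hxd : x < d) : ∃ y ∈ insert d F, x < y ∧ ∀ z ∈ F, x < z → y ≤ z := by
  obtain ⟨y, hy, hmin⟩ := ((insert d F).filter (x < ·)).exists_min_image id
    ⟨d, Finset.mem_filter.2 ⟨Finset.mem_insert_self d F, hxd⟩⟩
  rw [Finset.mem_filter] at hy
  exact ⟨y, hy.1, hy.2, fun z hz hxz =>
    hmin z (Finset.mem_filter.2 ⟨Finset.mem_insert_of_mem hz, hxz⟩)⟩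

lemma Set.mul_ncard_le_ncard_of_pairwiseDisjoint {α : Type*} {S : Set α} {𝒪 : Set (Set α)}
    {n : ℕ} (hS : S.Finite) (hsub : ∀ O ∈ 𝒪, O ⊆ S) (hdisj : 𝒪.PairwiseDisjoint id)
    (hn : ∀ O ∈ 𝒪, n ≤ O.ncard) : 𝒪.Finite ∧ n * 𝒪.ncard ≤ S.ncard := by
  have h𝒪 : 𝒪.Finite := hS.finite_subsets.subset hsub
  refine ⟨h𝒪, ?_⟩
  calc n * 𝒪.ncard = h𝒪.toFinset.card • n := by
        rw [ncard_eq_toFinset_card _ h𝒪, smul_eq_mul, mul_comm]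
    _ ≤ ∑ O ∈ h𝒪.toFinset, O.ncard :=
        Finset.card_nsmul_le_sum _ _ _ fun O hO => hn O (h𝒪.mem_toFinset.1 hO)
    _ = (⋃ O ∈ 𝒪, O).ncard := by
        rw [h𝒪.ncard_biUnion (fun O hO => hS.subset (hsub O hO)) hdisj,
          finsum_mem_eq_finite_toFinset_sum _ h𝒪]
    _ ≤ S.ncard := ncard_le_ncard (iUnion₂_subset hsub) hS

section Orbits

variable {X : Type*} {f : X → X} {x : X}

lemma fwdOrbit_eq_image_Iio (hx : x ∈ periodicPts f) :
    fwdOrbit f x = (f^[·] x) '' Iio (minimalPeriod f x) := by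
  refine Subset.antisymm ?_ (image_subset_range _ _)
  rintro _ ⟨n, rfl⟩
  exact ⟨n % minimalPeriod f x, Nat.mod_lt _ (minimalPeriod_pos_of_mem_periodicPts hx),
    iterate_mod_minimalPeriod_eq⟩

lemma ncard_fwdOrbit (hx : x ∈ periodicPts f) : (fwdOrbit f x).ncard = minimalPeriod f x := by
  rw [fwdOrbit_eq_image_Iio hx, iterate_injOn_Iio_minimalPeriod.ncard_image, ncard_Iio_nat]

lemma fwdOrbit_eq_of_mem (hx : x ∈ periodicPts f) {y : X} (hy : y ∈ fwdOrbit f x) :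
    fwdOrbit f y = fwdOrbit f x := by
  obtain ⟨m, rfl⟩ := hy
  refine Subset.antisymm (range_subset_iff.2 fun k => ⟨k + m, iterate_add_apply f k m x⟩) ?_
  rintro _ ⟨k, rfl⟩
  have hP := minimalPeriod_pos_of_mem_periodicPts hx
  refine ⟨minimalPeriod f x * m + k - m, ?_⟩
  change f^[_] (f^[m] x) = f^[k] x
  rw [← iterate_add_apply, Nat.sub_add_cancel (by nlinarith), add_comm, iterate_add_apply,
    ((isPeriodicPt_minimalPeriod f x).mul_const m).eq]

lemma pairwiseDisjoint_fwdOrbit :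
    {O | ∃ x ∈ periodicPts f, O = fwdOrbit f x}.PairwiseDisjoint id := by
  rintro _ ⟨x, hx, rfl⟩ _ ⟨y, hy, rfl⟩ hne
  refine Set.disjoint_left.2 fun z hzx hzy => hne ?_
  rw [← fwdOrbit_eq_of_mem hx hzx, fwdOrbit_eq_of_mem hy hzy]

end Orbits

def IsPeriodicLiftIn (ht : ℝ → ℝ) (q : ℕ) (p : ℤ) (s : Set ℝ) (x : ℝ) : Prop :=
  ht^[q] x = x + p ∧ ∀ j, ht^[j] x ∈ s

section PeriodicLifts

variable {ht : ℝ → ℝ} {l : ℕ} {a b : Fin l → ℝ} {q : ℕ} {p : ℤ}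

lemma IsPeriodicLiftIn.add_int (hsm : IsSemiMonotoneLift ht) {x : ℝ}
    (hx : IsPeriodicLiftIn ht q p (flatComplR a b) x) (m : ℤ) :
    IsPeriodicLiftIn ht q p (flatComplR a b) (x + m) := by
  refine ⟨?_, fun j => ?_⟩
  · rw [hsm.iterate_add_int, hx.1]
    ring
  · rw [hsm.iterate_add_int]
    exact add_int_mem_flatComplR (hx.2 j) m

lemma isPeriodicLiftIn_of_forall_lt (hsm : IsSemiMonotoneLift ht) (hq : 0 < q) {x : ℝ}
    (hx : ht^[q] x = x + p) (h : ∀ j < q, ht^[j] x ∈ flatComplR a b) :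
    IsPeriodicLiftIn ht q p (flatComplR a b) x := by
  refine ⟨hx, fun j => ?_⟩
  induction j using Nat.strong_induction_on with
  | _ j ih =>
    rcases lt_or_ge j q with hj | hj
    · exact h j hj
    · obtain ⟨k, rfl⟩ := Nat.exists_eq_add_of_le' hj
      rw [iterate_add_apply, hx, hsm.iterate_add_int]
      exact add_int_mem_flatComplR (ih k (by omega)) p

lemma exists_flatSpot_between (hsm : IsSemiMonotoneLift ht) {D : ℝ → ℝ}
    (hD : ∀ x ∈ flatComplR a b, 1 < D x ∧ HasDerivWithinAt ht (D x) (flatComplR a b) x)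
    (hq : 0 < q) {u v : ℝ} (hu : IsPeriodicLiftIn ht q p (flatComplR a b) u)
    (hv : IsPeriodicLiftIn ht q p (flatComplR a b) v) (huv : u < v) :
    ∃ j < q, ∃ i, ∃ n : ℤ, ht^[j] u ≤ a i + n ∧ b i + n ≤ ht^[j] v := by
  have hexp : ¬ v - u < ht^[q] v - ht^[q] u := by
    rw [hu.1, hv.1]
    simp
  obtain ⟨z, hz, j, hj, hzP⟩ : ∃ z ∈ Icc u v, ∃ j < q, ht^[j] z ∉ flatComplR a b := by
    by_contra! h
    exact hexp (sub_lt_iterate_sub_iterate hsm.1 hD huv hq h)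
  obtain ⟨i, n, hin⟩ := notMem_flatComplR_iff.1 hzP
  have hmono := hsm.2.1.iterate j
  refine ⟨j, hj, i, n, not_lt.1 fun h => hu.2 j i n ⟨h, ?_⟩, not_lt.1 fun h => hv.2 j i n ⟨?_, h⟩⟩
  · exact (hmono hz.1).trans_lt hin.2
  · exact hin.1.trans_le (hmono hz.2)

lemma card_le_mul_of_isPeriodicLiftIn (hsm : IsSemiMonotoneLift ht) (hab : ∀ i, a i < b i)
    {D : ℝ → ℝ}
    (hD : ∀ x ∈ flatComplR a b, 1 < D x ∧ HasDerivWithinAt ht (D x) (flatComplR a b) x)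
    (hq : 0 < q) {x₀ : ℝ} (hx₀ : IsPeriodicLiftIn ht q p (flatComplR a b) x₀) (F : Finset ℝ)
    (hF : ∀ x ∈ F, IsPeriodicLiftIn ht q p (flatComplR a b) x ∧ x ∈ Ico x₀ (x₀ + 1)) :
    F.card ≤ q * l := by
  have hnext : ∀ x : F, ∃ y : ℝ, ∃ ji : Fin q × Fin l, ∃ n : ℤ, ↑x < y ∧ y ≤ x₀ + 1 ∧
      (∀ z ∈ F, ↑x < z → y ≤ z) ∧ ht^[ji.1] x ≤ a ji.2 + n ∧ b ji.2 + n ≤ ht^[ji.1] y := by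
    rintro ⟨x, hx⟩
    obtain ⟨y, hyF, hxy, hmin⟩ := F.exists_next_mem_insert (hF x hx).2.2
    have hy : IsPeriodicLiftIn ht q p (flatComplR a b) y ∧ y ≤ x₀ + 1 := by
      rcases Finset.mem_insert.1 hyF with rfl | hyF
      · exact ⟨by exact_mod_cast hx₀.add_int hsm 1, le_rfl⟩
      · exact ⟨(hF y hyF).1, (hF y hyF).2.2.le⟩
    obtain ⟨j, hj, i, n, h1, h2⟩ := exists_flatSpot_between hsm hD hq (hF x hx).1 hy.1 hxy
    exact ⟨y, (⟨j, hj⟩, i), n, hxy, hy.2, hmin, h1, h2⟩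
  choose y ji n hxy hy hmin hleft hright using hnext
  -- Equal labels would put two integer translates of the same flat spot inside one period.
  have hinj : Injective ji := Injective.of_lt_imp_ne fun x x' hlt heq => by
    have hmono := hsm.2.1.iterate (ji x).1
    have h1 := hleft x'
    have h2 := hright x'
    rw [← heq] at h1 h2
    have hyx' := hmono (hmin x x' x'.2 hlt)
    have hy' := hmono (hy x')
    have hx₀x := hmono (hF x x.2).2.1
    have hshift : ht^[(ji x).1] (x₀ + 1) = ht^[(ji x).1] x₀ + 1 := by
      exact_mod_cast hsm.iterate_add_int _ x₀ 1
    have hn : n x < n x' := by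
      exact_mod_cast (by linarith [hab (ji x).2, hright x] : (n x : ℝ) < n x')
    have hn' : (n x : ℝ) + 1 ≤ n x' := by exact_mod_cast hn
    linarith [hab (ji x).2, hleft x, hright x]
  simpa using Fintype.card_le_of_injective ji hinj

lemma eventually_iterate_eq_of_not_isPeriodicLiftIn (hsm : IsSemiMonotoneLift ht)
    (hfs : ∀ i, IsFlatSpot ht (a i) (b i)) (hq : 0 < q) {x : ℝ} (hx : ht^[q] x = x + p)
    (hx' : ¬ IsPeriodicLiftIn ht q p (flatComplR a b) x) : ∀ᶠ y in 𝓝 x, ht^[q] y = x + p := by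
  obtain ⟨j, hj, hjP⟩ : ∃ j < q, ht^[j] x ∉ flatComplR a b := by
    by_contra! h
    exact hx' (isPeriodicLiftIn_of_forall_lt hsm hq hx h)
  obtain ⟨i, n, hin⟩ := notMem_flatComplR_iff.1 hjP
  filter_upwards [(hsm.1.iterate j).continuousAt.preimage_mem_nhds (isOpen_Ioo.mem_nhds hin)]
    with y hy
  obtain ⟨k, rfl⟩ : ∃ k, q = k + (j + 1) := ⟨q - (j + 1), by omega⟩
  rw [iterate_add_apply, iterate_succ_apply',
    (hfs i).apply_eq_of_mem hsm n (Ioo_subset_Icc_self hy) (Ioo_subset_Icc_self hin),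
    ← iterate_succ_apply' ht j x, ← iterate_add_apply ht k (j + 1) x, hx]

lemma exists_isPeriodicLiftIn (hsm : IsSemiMonotoneLift ht)
    (hfs : ∀ i, IsFlatSpot ht (a i) (b i)) (hq : 0 < q) (hrot : HasRotNum ht (p / q)) :
    ∃ x, IsPeriodicLiftIn ht q p (flatComplR a b) x := by
  obtain ⟨x₀, hx₀⟩ := hsm.exists_iterate_eq_add hq hrot
  by_contra! hno
  have hloc := fun x hx => eventually_iterate_eq_of_not_isPeriodicLiftIn hsm hfs hq hx (hno x)
  obtain ⟨ε, hε, hball⟩ := Metric.eventually_nhds_iff.1 (hloc x₀ hx₀)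
  set δ := min ε 1 / 2 with hδdef
  have hδ : 0 < δ := by positivity
  have hδε : δ < ε := by linarith [min_le_left ε 1, hδdef]
  have hδ1 : δ ≤ 1 / 2 := by linarith [min_le_right ε 1, hδdef]
  have hu : ht^[q] (x₀ + δ) = x₀ + p := hball (by simp [abs_of_pos hδ, hδε])
  have hv : ht^[q] (x₀ + 1 - δ) = x₀ + 1 + p := by
    have := hsm.iterate_add_int q (x₀ - δ) 1
    push_cast at this
    rw [hball (y := x₀ - δ) (by simp [abs_of_pos hδ, hδε])] at this
    rw [show x₀ + 1 - δ = x₀ - δ + 1 by ring, this]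
    ring
  obtain ⟨z, hzuv, hz, hpos⟩ := exists_eq_zero_forall_pos_of_le (F := fun y => ht^[q] y - p - y)
    (((hsm.1.iterate q).sub continuous_const).sub continuous_id) (u := x₀ + δ)
    (v := x₀ + 1 - δ) (by linarith) (by simp only [hu]; linarith) (by simp only [hv]; linarith)
  obtain ⟨y, hyz, hy⟩ := (((hloc z (by linarith)).filter_mono nhdsWithin_le_nhds).and
    (Ioc_mem_nhdsGT hzuv.2)).exists
  have := hpos y hy
  simp only [hyz] at this
  linarith [hy.1]

end PeriodicLifts

section Circle

variable {ht : ℝ → ℝ} {h : Circle1 → Circle1} {l : ℕ} {a b : Fin l → ℝ} {q : ℕ} {p : ℤ}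

lemma iterate_mk1 (hlift : ∀ x, h (mk1 x) = mk1 (ht x)) (n : ℕ) (x : ℝ) :
    h^[n] (mk1 x) = mk1 (ht^[n] x) :=
  ((Semiconj.iterate_right (fun x => (hlift x).symm) n) x).symm

lemma IsPeriodicLiftIn.isPeriodicPt_mk1 (hlift : ∀ x, h (mk1 x) = mk1 (ht x)) {x : ℝ}
    (hx : IsPeriodicLiftIn ht q p (flatComplR a b) x) :
    IsPeriodicPt h q (mk1 x) ∧ fwdOrbit h (mk1 x) ⊆ flatComplC a b := by
  refine ⟨?_, ?_⟩
  · change h^[q] (mk1 x) = mk1 x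
    rw [iterate_mk1 hlift, hx.1]
    exact mk1_eq_mk1_iff.2 ⟨p, rfl⟩
  · rintro _ ⟨j, rfl⟩
    change h^[j] (mk1 x) ∈ _
    rw [iterate_mk1 hlift, mk1_mem_flatComplC_iff]
    exact hx.2 j

lemma finite_and_ncard_le_of_isPeriodicLiftIn (hsm : IsSemiMonotoneLift ht)
    (hab : ∀ i, a i < b i) {D : ℝ → ℝ}
    (hD : ∀ x ∈ flatComplR a b, 1 < D x ∧ HasDerivWithinAt ht (D x) (flatComplR a b) x)
    (hq : 0 < q) :
    {ξ | ∃ x, IsPeriodicLiftIn ht q p (flatComplR a b) x ∧ mk1 x = ξ}.Finite ∧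
      {ξ | ∃ x, IsPeriodicLiftIn ht q p (flatComplR a b) x ∧ mk1 x = ξ}.ncard ≤ q * l := by
  set S := {ξ | ∃ x, IsPeriodicLiftIn ht q p (flatComplR a b) x ∧ mk1 x = ξ}
  rcases S.eq_empty_or_nonempty with hS | ⟨-, x₀, hx₀, -⟩
  · simp [hS]
  set W := {x | IsPeriodicLiftIn ht q p (flatComplR a b) x ∧ x ∈ Ico x₀ (x₀ + 1)}
  have hWcard (F : Finset ℝ) (hF : ↑F ⊆ W) : F.card ≤ q * l :=
    card_le_mul_of_isPeriodicLiftIn hsm hab hD hq hx₀ F fun x hx => hF hx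
  have hWfin : W.Finite := by
    by_contra hinf
    obtain ⟨F, hFW, hFcard⟩ := Set.Infinite.exists_subset_card_eq hinf (q * l + 1)
    have := hWcard F hFW
    omega
  have hSW : S ⊆ mk1 '' W := by
    rintro _ ⟨x, hx, rfl⟩
    refine ⟨x + (-⌊x - x₀⌋ : ℤ), ⟨hx.add_int hsm _, ?_, ?_⟩, mk1_eq_mk1_iff.2 ⟨_, rfl⟩⟩ <;>
      push_cast <;> linarith [Int.floor_le (x - x₀), Int.lt_floor_add_one (x - x₀)]
  refine ⟨(hWfin.image mk1).subset hSW, ?_⟩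
  calc S.ncard ≤ (mk1 '' W).ncard := ncard_le_ncard hSW (hWfin.image mk1)
    _ ≤ W.ncard := ncard_image_le hWfin
    _ ≤ q * l := by
      rw [ncard_eq_toFinset_card _ hWfin]
      exact hWcard _ (by simp)

lemma dvd_and_exists_isPeriodicLiftIn (hsm : IsSemiMonotoneLift ht)
    (hlift : ∀ x, h (mk1 x) = mk1 (ht x)) (hq : 0 < q) (hcop : Int.gcd p q = 1)
    (hrot : HasRotNum ht (p / q)) {ξ : Circle1} {n : ℕ} (hn : 0 < n) (hξ : IsPeriodicPt h n ξ)
    (hP : fwdOrbit h ξ ⊆ flatComplC a b) :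
    q ∣ n ∧ ∃ x, IsPeriodicLiftIn ht q p (flatComplR a b) x ∧ mk1 x = ξ := by
  obtain ⟨x, rfl⟩ : ∃ x, mk1 x = ξ := QuotientAddGroup.mk_surjective ξ
  obtain ⟨m, hm⟩ := mk1_eq_mk1_iff.1 ((iterate_mk1 hlift n x).symm.trans hξ)
  obtain ⟨hdvd, hx⟩ := hsm.dvd_and_iterate_eq_add hq hcop hrot hn hm
  refine ⟨hdvd, x, ⟨hx, fun j => ?_⟩, rfl⟩
  rw [← mk1_mem_flatComplC_iff, ← iterate_mk1 hlift]
  exact hP ⟨j, rfl⟩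

lemma fwdOrbit_subset_and_le_ncard (hsm : IsSemiMonotoneLift ht)
    (hlift : ∀ x, h (mk1 x) = mk1 (ht x)) (hq : 0 < q) (hcop : Int.gcd p q = 1)
    (hrot : HasRotNum ht (p / q)) {ξ : Circle1} {n : ℕ} (hn : 0 < n) (hξ : IsPeriodicPt h n ξ)
    (hP : fwdOrbit h ξ ⊆ flatComplC a b) :
    fwdOrbit h ξ ⊆ {η | ∃ x, IsPeriodicLiftIn ht q p (flatComplR a b) x ∧ mk1 x = η} ∧
      q ≤ (fwdOrbit h ξ).ncard := by
  have hξper : ξ ∈ periodicPts h := mk_mem_periodicPts hn hξ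
  refine ⟨fun η hη => ?_, ?_⟩
  · obtain ⟨m, rfl⟩ := hη
    exact (dvd_and_exists_isPeriodicLiftIn hsm hlift hq hcop hrot hn (hξ.apply_iterate m)
      ((fwdOrbit_eq_of_mem hξper ⟨m, rfl⟩).subset.trans hP)).2
  · rw [ncard_fwdOrbit hξper]
    exact Nat.le_of_dvd (minimalPeriod_pos_of_mem_periodicPts hξper)
      (dvd_and_exists_isPeriodicLiftIn hsm hlift hq hcop hrot
        (minimalPeriod_pos_of_mem_periodicPts hξper) (isPeriodicPt_minimalPeriod h ξ) hP).1

end Circle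

theorem statement4_general (ht : ℝ → ℝ) (hsm : IsSemiMonotoneLift ht)
    (h : Circle1 → Circle1) (hlift : ∀ x, h (mk1 x) = mk1 (ht x))
    (l : ℕ) (a b : Fin l → ℝ)
    (hfs : ∀ i, IsFlatSpot ht (a i) (b i))
    (D : ℝ → ℝ)
    (hD : ∀ x ∈ flatComplR a b, 1 < D x ∧ HasDerivWithinAt ht (D x) (flatComplR a b) x)
    (p : ℤ) (q : ℕ) (hq : 1 ≤ q) (hcop : Int.gcd p q = 1)
    (hrot : HasRotNum ht ((p : ℝ) / q)) :
    ∀ PO : Set (Set Circle1),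
      PO = {O | ∃ x : Circle1, (∃ n, 0 < n ∧ h^[n] x = x) ∧ O = fwdOrbit h x ∧
        O ⊆ flatComplC a b} →
      PO.Nonempty ∧ PO.Finite ∧ PO.ncard ≤ l := by
  intro PO hPO
  set S := {ξ | ∃ x, IsPeriodicLiftIn ht q p (flatComplR a b) x ∧ mk1 x = ξ}
  obtain ⟨hSfin, hScard⟩ : S.Finite ∧ S.ncard ≤ q * l :=
    finite_and_ncard_le_of_isPeriodicLiftIn hsm (fun i => (hfs i).1) hD hq
  have horbit : ∀ O ∈ PO, O ⊆ S ∧ q ≤ O.ncard := by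
    rw [hPO]
    rintro _ ⟨ξ, ⟨n, hn, hξ⟩, rfl, hP⟩
    exact fwdOrbit_subset_and_le_ncard hsm hlift hq hcop hrot hn hξ hP
  have hdisj : PO.PairwiseDisjoint id := pairwiseDisjoint_fwdOrbit.subset <| by
    rw [hPO]
    rintro _ ⟨ξ, ⟨n, hn, hξ⟩, rfl, -⟩
    exact ⟨ξ, mk_mem_periodicPts hn hξ, rfl⟩
  obtain ⟨hfin, hcard⟩ := Set.mul_ncard_le_ncard_of_pairwiseDisjoint hSfin
    (fun O hO => (horbit O hO).1) hdisj fun O hO => (horbit O hO).2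
  obtain ⟨x₀, hx₀⟩ := exists_isPeriodicLiftIn hsm hfs hq hrot
  obtain ⟨hper, hP⟩ := hx₀.isPeriodicPt_mk1 hlift
  have hmem : fwdOrbit h (mk1 x₀) ∈ PO := hPO ▸ ⟨mk1 x₀, ⟨q, hq, hper⟩, rfl, hP⟩
  exact ⟨⟨_, hmem⟩, hfin, Nat.le_of_mul_le_mul_left (hcard.trans hScard) hq⟩

/-- A semi-monotone circle map with ℓ flat spots, expanding on
the positive-slope region, with rotation number p/q in lowest terms, has at least
one and at most ℓ periodic orbits wholly contained in the positive-slope region. -/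
theorem statement4 (ht : ℝ → ℝ) (hsm : IsSemiMonotoneLift ht)
    (h : Circle1 → Circle1) (hlift : ∀ x, h (mk1 x) = mk1 (ht x))
    (l : ℕ) (a b : Fin l → ℝ)
    (hfs : ∀ i, IsFlatSpot ht (a i) (b i))
    (hrep : ∀ i, a i ∈ Set.Ico (0 : ℝ) 1)
    (hdist : Function.Injective a)
    (hall : ∀ a' b' : ℝ, IsFlatSpot ht a' b' → ∃ i, ∃ n : ℤ, a' = a i + n ∧ b' = b i + n)
    (D : ℝ → ℝ) (hDcont : ContinuousOn D (flatComplR a b))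
    (hD : ∀ x ∈ flatComplR a b, 1 < D x ∧ HasDerivWithinAt ht (D x) (flatComplR a b) x)
    (p : ℤ) (q : ℕ) (hq : 1 ≤ q) (hcop : Int.gcd p q = 1)
    (hrot : HasRotNum ht ((p : ℝ) / q)) :
    ∀ PO : Set (Set Circle1),
      PO = {O | ∃ x : Circle1, (∃ n, 0 < n ∧ h^[n] x = x) ∧ O = fwdOrbit h x ∧
        O ⊆ flatComplC a b} →
      PO.Nonempty ∧ PO.Finite ∧ PO.ncard ≤ l :=
  statement4_general ht hsm h hlift l a b hfs D hD p q hq hcop hrot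
end
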